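/- arXiv:2405.03667 — 3 statements merged into one kernel-verified Lean document; each statement's English description precedes it below -/
import Mathlib

section
/- Let X and Y be random variables on a probability space taking values in ℝ^p and ℝ^q respectively (p, q ∈ ℕ). Then there exist a probability space carrying random variables X' (with values in ℝ^p) and W' (with values in [0,1]) and a measurable function f : ℝ^p × [0,1] → ℝ^q such that W' is uniformly distributed on [0,1], W' is independent of X', and the joint law of (X', f(X', W')) equals the joint law of (X, Y). -/
open MeasureTheory ProbabilityTheory

namespace NoiseOutsourcingAux

open Set Filter

variable {α : Type*} [MeasurableSpace α]

lemma sInf_le_iff_le_condCDF (ρ : Measure (α × ℝ)) (a : α) {w : ℝ} (hw : w ∈ Set.Ioo (0:ℝ) 1)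
    (t : ℝ) :
    sInf {y : ℝ | w ≤ condCDF ρ a y} ≤ t ↔ w ≤ condCDF ρ a t := by
  have hne : {y : ℝ | w ≤ condCDF ρ a y}.Nonempty := by
    have h1 : ∀ᶠ y in atTop, w < condCDF ρ a y :=
      (tendsto_condCDF_atTop ρ a).eventually (eventually_gt_nhds hw.2)
    obtain ⟨y, hy⟩ := h1.exists
    exact ⟨y, hy.le⟩
  have hbdd : BddBelow {y : ℝ | w ≤ condCDF ρ a y} := by
    have h0 : ∀ᶠ y in atBot, condCDF ρ a y < w :=
      (tendsto_condCDF_atBot ρ a).eventually (eventually_lt_nhds hw.1)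
    obtain ⟨y₀, hy₀⟩ := h0.exists
    refine ⟨y₀, fun z hz => ?_⟩
    by_contra hzy
    push_neg at hzy
    exact absurd (hz.trans ((condCDF ρ a).mono hzy.le)) (not_le.mpr hy₀)
  constructor
  · intro hinf
    have key : ∀ s, t < s → w ≤ condCDF ρ a s := by
      intro s hs
      obtain ⟨z, hz, hzlt⟩ := (csInf_lt_iff hbdd hne).mp (lt_of_le_of_lt hinf hs)
      exact hz.trans ((condCDF ρ a).mono hzlt.le)
    have htd : Tendsto (condCDF ρ a) (nhdsWithin t (Set.Ioi t)) (nhds (condCDF ρ a t)) :=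
      ((condCDF ρ a).right_continuous t).tendsto.mono_left
        (nhdsWithin_mono t Set.Ioi_subset_Ici_self)
    refine ge_of_tendsto htd ?_
    filter_upwards [self_mem_nhdsWithin] with s hs using key s hs
  · intro h
    exact csInf_le hbdd h

noncomputable def qf (ρ : Measure (α × ℝ)) (z : α × ℝ) : ℝ :=
  if z.2 ∈ Set.Ioo (0:ℝ) 1 then sInf {y : ℝ | z.2 ≤ condCDF ρ z.1 y} else 0

lemma measurable_qf (ρ : Measure (α × ℝ)) : Measurable (qf ρ) := by
  refine measurable_of_Iic fun t => ?_
  have hset : qf ρ ⁻¹' Set.Iic t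
      = ({z : α × ℝ | z.2 ∈ Set.Ioo (0:ℝ) 1} ∩ {z : α × ℝ | z.2 ≤ condCDF ρ z.1 t})
        ∪ ({z : α × ℝ | z.2 ∈ Set.Ioo (0:ℝ) 1}ᶜ ∩ {z : α × ℝ | (0:ℝ) ≤ t}) := by
    ext z
    by_cases hz : z.2 ∈ Set.Ioo (0:ℝ) 1
    · simp only [Set.mem_preimage, Set.mem_Iic, qf, if_pos hz, Set.mem_union, Set.mem_inter_iff,
        Set.mem_setOf_eq, Set.mem_compl_iff, hz, true_and, not_true, false_and, or_false]
      exact sInf_le_iff_le_condCDF ρ z.1 hz t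
    · simp only [Set.mem_preimage, Set.mem_Iic, qf, if_neg hz, Set.mem_union, Set.mem_inter_iff,
        Set.mem_setOf_eq, Set.mem_compl_iff, hz, false_and, false_or, not_false_iff, true_and,
        if_false]
  rw [hset]
  refine MeasurableSet.union (MeasurableSet.inter ?_ ?_) (MeasurableSet.inter ?_ ?_)
  · exact measurable_snd measurableSet_Ioo
  · exact measurableSet_le measurable_snd ((measurable_condCDF ρ t).comp measurable_fst)
  · exact (measurable_snd measurableSet_Ioo).compl
  · exact MeasurableSet.const _

lemma measure_eq_of_sandwich {X : Type*} [MeasurableSpace X] {μ : Measure X} {s t u : Set X}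
    (h1 : s ⊆ t) (h2 : t ⊆ s ∪ u) (hu : μ u = 0) : μ s = μ t :=
  le_antisymm (measure_mono h1)
    ((measure_mono h2).trans ((measure_union_le s u).trans (by simp [hu])))

instance : IsProbabilityMeasure (volume.restrict (Set.Icc (0:ℝ) 1)) := by
  constructor
  rw [Measure.restrict_apply_univ, Real.volume_Icc]
  norm_num

lemma map_qf (ρ : Measure (α × ℝ)) [IsFiniteMeasure ρ] (a : α) :
    Measure.map (fun w => qf ρ (a, w)) (volume.restrict (Set.Icc (0:ℝ) 1))
      = (condCDF ρ a).measure := by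
  have hm : Measurable (fun w => qf ρ (a, w)) :=
    (measurable_qf ρ).comp measurable_prodMk_left
  have : IsProbabilityMeasure
      (Measure.map (fun w => qf ρ (a, w)) (volume.restrict (Set.Icc (0:ℝ) 1))) :=
    Measure.isProbabilityMeasure_map hm.aemeasurable
  refine Measure.ext_of_Iic _ _ fun t => ?_
  rw [Measure.map_apply hm measurableSet_Iic,
    Measure.restrict_apply (hm measurableSet_Iic), measure_condCDF_Iic]
  set c : ℝ := condCDF ρ a t with hc
  have hc0 : 0 ≤ c := condCDF_nonneg ρ a t
  have hc1 : c ≤ 1 := condCDF_le_one ρ a t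
  set A : Set ℝ := (fun w => qf ρ (a, w)) ⁻¹' Set.Iic t with hA
  have h01 : volume ({0, 1} : Set ℝ) = 0 :=
    ((Set.countable_singleton (1:ℝ)).insert 0).measure_zero _
  have step1 : volume (A ∩ Set.Ioo 0 1) = volume (A ∩ Set.Icc 0 1) := by
    refine measure_eq_of_sandwich (Set.inter_subset_inter_right _ Set.Ioo_subset_Icc_self)
      (fun w hw => ?_) h01
    rcases eq_or_lt_of_le hw.2.1 with h0 | h0
    · exact Or.inr (Or.inl h0.symm)
    rcases eq_or_lt_of_le hw.2.2 with h1 | h1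
    · exact Or.inr (Or.inr h1)
    exact Or.inl ⟨hw.1, h0, h1⟩
  have step2 : A ∩ Set.Ioo 0 1 = Set.Iic c ∩ Set.Ioo 0 1 := by
    ext w
    simp only [hA, Set.mem_inter_iff, Set.mem_preimage, Set.mem_Iic, and_congr_left_iff]
    intro hw
    rw [qf, if_pos hw]
    exact sInf_le_iff_le_condCDF ρ a hw t
  have step3 : volume (Set.Iic c ∩ Set.Ioo 0 1) = volume (Set.Ioc 0 c) := by
    refine measure_eq_of_sandwich (fun w hw => ⟨hw.2.1, hw.1⟩) (fun w hw => ?_)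
      ((Set.countable_singleton (1:ℝ)).measure_zero _)
    rcases eq_or_lt_of_le (hw.2.trans hc1) with h1 | h1
    · exact Or.inr h1
    · exact Or.inl ⟨hw.2, hw.1, h1⟩
  rw [← step1, step2, step3, Real.volume_Ioc, sub_zero]

lemma map_pair_qf (ρ : Measure (α × ℝ)) [IsProbabilityMeasure ρ] :
    Measure.map (fun z : α × ℝ => (z.1, qf ρ z))
      (ρ.fst.prod (volume.restrict (Set.Icc (0:ℝ) 1))) = ρ := by
  classical
  set ν : Measure ℝ := volume.restrict (Set.Icc (0:ℝ) 1) with hν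
  have hmpair : Measurable (fun z : α × ℝ => (z.1, qf ρ z)) :=
    measurable_fst.prodMk (measurable_qf ρ)
  have hPprob : IsProbabilityMeasure (ρ.fst.prod ν) := by infer_instance
  have hmapprob : IsProbabilityMeasure
      (Measure.map (fun z : α × ℝ => (z.1, qf ρ z)) (ρ.fst.prod ν)) :=
    Measure.isProbabilityMeasure_map hmpair.aemeasurable
  refine ext_of_generate_finite _ generateFrom_prod.symm isPiSystem_prod (fun S hS => ?_)
    (by simp [measure_univ])
  obtain ⟨s, hs, t, ht, rfl⟩ := hS
  simp only [Set.mem_setOf_eq] at hs ht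
  rw [Measure.map_apply hmpair (hs.prod ht),
    Measure.prod_apply (hmpair (hs.prod ht))]
  have hpre : ∀ x : α, (Prod.mk x ⁻¹' ((fun z : α × ℝ => (z.1, qf ρ z)) ⁻¹' s ×ˢ t))
      = if x ∈ s then (fun w => qf ρ (x, w)) ⁻¹' t else ∅ := by
    intro x
    by_cases hx : x ∈ s
    · ext w; simp [hx, Set.mem_prod]
    · ext w; simp [hx, Set.mem_prod]
  have hint : ∫⁻ x, ν (Prod.mk x ⁻¹' ((fun z : α × ℝ => (z.1, qf ρ z)) ⁻¹' s ×ˢ t)) ∂ρ.fst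
      = ∫⁻ x in s, (condCDF ρ x).measure t ∂ρ.fst := by
    rw [← lintegral_indicator hs]
    refine lintegral_congr fun x => ?_
    rw [hpre x]
    by_cases hx : x ∈ s
    · rw [if_pos hx, Set.indicator_of_mem hx, ← map_qf ρ x]
      exact (Measure.map_apply ((measurable_qf ρ).comp measurable_prodMk_left) ht).symm
    · rw [if_neg hx, Set.indicator_of_notMem hx, measure_empty]
  rw [hint]
  have h2 := setLIntegral_toKernel_prod (isCondKernelCDF_condCDF ρ) () hs ht
  simpa only [IsCondKernelCDF.toKernel_apply, Kernel.const_apply] using h2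

end NoiseOutsourcingAux

open NoiseOutsourcingAux in
/-- Noise outsourcing: for any random variables `X : Ω → ℝ^p`, `Y : Ω → ℝ^q`, there exist
a probability space carrying `X'`, a uniform-on-`[0,1]` variable `W'` independent of `X'`,
and a measurable `f` such that `(X', f(X', W'))` has the same joint law as `(X, Y)`. -/
theorem noise_outsourcing
    {p q : ℕ} {Ω : Type*} [MeasurableSpace Ω] (P : Measure Ω) [IsProbabilityMeasure P]
    (X : Ω → (Fin p → ℝ)) (Y : Ω → (Fin q → ℝ))
    (hX : Measurable X) (hY : Measurable Y) :
    ∃ (Ω' : Type) (_ : MeasurableSpace Ω') (P' : Measure Ω')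
      (X' : Ω' → (Fin p → ℝ)) (W' : Ω' → ℝ) (f : (Fin p → ℝ) × ℝ → (Fin q → ℝ)),
      IsProbabilityMeasure P' ∧ Measurable X' ∧ Measurable W' ∧ Measurable f ∧
      Measure.map W' P' = volume.restrict (Set.Icc (0 : ℝ) 1) ∧
      IndepFun X' W' P' ∧
      Measure.map (fun ω => (X' ω, f (X' ω, W' ω))) P'
        = Measure.map (fun ω => (X ω, Y ω)) P := by
  classical
  obtain ⟨e, he⟩ := exists_measurableEmbedding_real (Fin q → ℝ)
  obtain ⟨einv, heinv_m, heinv⟩ :=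
    he.exists_measurable_extend measurable_id (fun _ => ⟨fun _ => 0⟩)
  set ρ : Measure ((Fin p → ℝ) × ℝ) := Measure.map (fun ω => (X ω, e (Y ω))) P with hρ
  have hXe : Measurable fun ω => (X ω, e (Y ω)) := hX.prodMk (he.measurable.comp hY)
  haveI : IsProbabilityMeasure ρ := Measure.isProbabilityMeasure_map hXe.aemeasurable
  set ν : Measure ℝ := volume.restrict (Set.Icc (0:ℝ) 1) with hν
  set P' : Measure ((Fin p → ℝ) × ℝ) := (Measure.map X P).prod ν with hP'
  have hfst : ρ.fst = Measure.map X P := Measure.fst_map_prodMk (he.measurable.comp hY)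
  haveI : IsProbabilityMeasure (Measure.map X P) := Measure.isProbabilityMeasure_map hX.aemeasurable
  haveI hP'prob : IsProbabilityMeasure P' := by rw [hP']; infer_instance
  set h : (Fin p → ℝ) × ℝ → ℝ := qf ρ with hh
  have hhm : Measurable h := measurable_qf ρ
  set f : (Fin p → ℝ) × ℝ → (Fin q → ℝ) := fun z => einv (h z) with hf
  have hfm : Measurable f := heinv_m.comp hhm
  have hkey : Measure.map (fun z : (Fin p → ℝ) × ℝ => (z.1, h z)) P' = ρ := by
    rw [hP', ← hfst]; exact map_pair_qf ρ
  refine ⟨(Fin p → ℝ) × ℝ, inferInstance, P', Prod.fst, Prod.snd, f, hP'prob,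
    measurable_fst, measurable_snd, hfm, ?_, ?_, ?_⟩
  · rw [hP', Measure.map_snd_prod, measure_univ, one_smul]
  · rw [indepFun_iff_measure_inter_preimage_eq_mul]
    intro s t hs ht
    have h2 : Prod.fst ⁻¹' s = s ×ˢ (Set.univ : Set ℝ) := by rw [Set.prod_univ]
    have h3 : Prod.snd ⁻¹' t = (Set.univ : Set (Fin p → ℝ)) ×ˢ t := by rw [Set.univ_prod]
    rw [← Set.prod_eq, hP', Measure.prod_prod, h2, h3, Measure.prod_prod,
      Measure.prod_prod, measure_univ, measure_univ, mul_one, one_mul]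
  · have hΦ : MeasurableEmbedding
        (fun x : (Fin p → ℝ) × (Fin q → ℝ) => ((id x.1 : Fin p → ℝ), e x.2)) :=
      MeasurableEmbedding.id.prodMap he
    set Φ : (Fin p → ℝ) × (Fin q → ℝ) → (Fin p → ℝ) × ℝ :=
      fun x => (id x.1, e x.2) with hΦdef
    have hinj : ∀ (ν₁ ν₂ : Measure ((Fin p → ℝ) × (Fin q → ℝ))),
        Measure.map Φ ν₁ = Measure.map Φ ν₂ → ν₁ = ν₂ := by
      intro ν₁ ν₂ hmap
      ext s hs
      have h1 := hΦ.map_apply ν₁ (Φ '' s)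
      have h2 := hΦ.map_apply ν₂ (Φ '' s)
      rw [hmap] at h1
      rw [hΦ.injective.preimage_image] at h1 h2
      exact h1.symm.trans h2
    apply hinj
    rw [Measure.map_map hΦ.measurable
        (show Measurable fun ω : (Fin p → ℝ) × ℝ => (ω.1, f (ω.1, ω.2)) from
          measurable_fst.prodMk (hfm.comp (measurable_fst.prodMk measurable_snd))),
      Measure.map_map hΦ.measurable (hX.prodMk hY)]
    have hnull : P' {z : (Fin p → ℝ) × ℝ | h z ∉ Set.range e} = 0 := by
      have hA : MeasurableSet (Set.range e) := he.measurableSet_range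
      have hset : {z : (Fin p → ℝ) × ℝ | h z ∉ Set.range e}
          = (fun z : (Fin p → ℝ) × ℝ => (z.1, h z)) ⁻¹'
            (Set.univ ×ˢ (Set.range e)ᶜ) := by
        ext z; simp
      rw [hset, ← Measure.map_apply (measurable_fst.prodMk hhm)
          (MeasurableSet.univ.prod hA.compl), hkey, hρ,
        Measure.map_apply hXe (MeasurableSet.univ.prod hA.compl)]
      have : (fun ω => (X ω, e (Y ω))) ⁻¹' (Set.univ ×ˢ (Set.range e)ᶜ) = ∅ := by
        ext ω; simp [Set.mem_range_self]
      rw [this, measure_empty]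
    have hae : (fun z : (Fin p → ℝ) × ℝ => (z.1, e (einv (h z))))
        =ᵐ[P'] (fun z => (z.1, h z)) := by
      rw [Filter.eventuallyEq_iff_exists_mem]
      refine ⟨{z | h z ∈ Set.range e}, ?_, fun z hz => ?_⟩
      · rw [mem_ae_iff]
        convert hnull using 2
        rfl
      · obtain ⟨y, hy⟩ := hz
        have : einv (h z) = y := by rw [← hy]; exact congrFun heinv y
        simp only [this, hy]
    show Measure.map (fun z : (Fin p → ℝ) × ℝ => (z.1, e (einv (h z)))) P'
        = Measure.map (fun ω => (X ω, e (Y ω))) P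
    rw [Measure.map_congr hae, hkey, hρ]
end

section
/- Let (X, Y) follow the additive noise model add(η̃, h̃; μ) and let η : ℝ^p → ℝ^q be measurable. Assume the standard assumptions: (i) E[h̃(W)] = 0 ∈ ℝ^q; (ii) E[Y − η(X)] = 0 ∈ ℝ^q; (iii) both random vectors (X, Y − η(X)) and (X, h̃(W)) have densities. Then the following are equivalent: (a) η̃ = η μ-almost everywhere; (b) X and Y − η(X) are independent random variables. -/
open MeasureTheory ProbabilityTheory

/-- Theorem 1 of the paper: for a system `(X, Y)` following the additive noise model
`add(η', h'; μ)` (i.e. `X` has law `μ`, `W` is uniform on `[0,1]` and independent of `X`,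
and `Y = η'(X) + h'(W)` a.s.), under the standard assumptions
(`E[h'(W)] = 0`, `E[Y - η(X)] = 0`, and both `(X, Y - η(X))` and `(X, h'(W))` have densities),
the model-equivalence `η' = η` `μ`-a.e. holds iff `X` and the residual `Y - η(X)` are
independent. -/
theorem anm_model_drift_iff_independent
    {p q : ℕ} {Ω : Type*} [MeasurableSpace Ω] (P : Measure Ω) [IsProbabilityMeasure P]
    (X : Ω → (Fin p → ℝ)) (W : Ω → ℝ) (Y : Ω → (Fin q → ℝ))
    (μ : Measure (Fin p → ℝ))
    (η' η : (Fin p → ℝ) → (Fin q → ℝ)) (h' : ℝ → (Fin q → ℝ))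
    (hX : Measurable X) (hW : Measurable W) (hY : Measurable Y)
    (hη' : Measurable η') (hη : Measurable η) (hh' : Measurable h')
    (hlawX : Measure.map X P = μ)
    (hlawW : Measure.map W P = volume.restrict (Set.Icc (0 : ℝ) 1))
    (hindep : IndepFun X W P)
    (hadd : ∀ᵐ ω ∂P, Y ω = η' (X ω) + h' (W ω))
    (hint1 : Integrable (fun ω => h' (W ω)) P)
    (hint2 : Integrable (fun ω => Y ω - η (X ω)) P)
    (hmean1 : ∫ ω, h' (W ω) ∂P = 0)
    (hmean2 : ∫ ω, (Y ω - η (X ω)) ∂P = 0)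
    (hdens1 : Measure.map (fun ω => (X ω, Y ω - η (X ω))) P
      ≪ (volume : Measure ((Fin p → ℝ) × (Fin q → ℝ))))
    (hdens2 : Measure.map (fun ω => (X ω, h' (W ω))) P
      ≪ (volume : Measure ((Fin p → ℝ) × (Fin q → ℝ)))) :
    (η' =ᵐ[μ] η) ↔ IndepFun X (fun ω => Y ω - η (X ω)) P := by
  have hR : Measurable (fun ω => Y ω - η (X ω)) := hY.sub (hη.comp hX)
  have hindepW : IndepFun X (fun ω => h' (W ω)) P := hindep.comp measurable_id hh'
  constructor
  · intro h
    have heq : ∀ᵐ ω ∂P, η' (X ω) = η (X ω) := by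
      rw [← hlawX] at h
      exact ae_of_ae_map hX.aemeasurable h
    have hRW : (fun ω => h' (W ω)) =ᵐ[P] (fun ω => Y ω - η (X ω)) := by
      filter_upwards [hadd, heq] with ω h1 h2
      rw [h1, h2]; abel
    exact hindepW.congr (Filter.EventuallyEq.refl _ _) hRW
  · intro hind
    -- conditional expectation w.r.t. σ(X)
    have hle := hX.comap_le
    set m : MeasurableSpace Ω := MeasurableSpace.comap X MeasurableSpace.pi with hm
    haveI : SigmaFinite (P.trim hle) := by
      haveI : IsFiniteMeasure (P.trim hle) := isFiniteMeasure_trim hle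
      infer_instance
    have hcR : P[(fun ω => Y ω - η (X ω)) | m] =ᵐ[P]
        fun _ => ∫ ω, (Y ω - η (X ω)) ∂P :=
      condExp_indep_eq hR.comap_le hle
        (Measurable.stronglyMeasurable
          (comap_measurable (fun ω => Y ω - η (X ω)))) hind.symm
    have hcW : P[(fun ω => h' (W ω)) | m] =ᵐ[P] fun _ => ∫ ω, h' (W ω) ∂P :=
      condExp_indep_eq (hh'.comp hW).comap_le hle
        (Measurable.stronglyMeasurable
          (comap_measurable (fun ω => h' (W ω)))) hindepW.symm
    -- the drift term G
    set G : Ω → (Fin q → ℝ) := fun ω => η' (X ω) - η (X ω) with hG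
    have hGeq : G =ᵐ[P] fun ω => (Y ω - η (X ω)) - h' (W ω) := by
      filter_upwards [hadd] with ω h1
      rw [hG]; simp only; rw [h1]; abel
    have hGint : Integrable G P := (hint2.sub hint1).congr hGeq.symm
    have hGsm : StronglyMeasurable[m] G :=
      Measurable.stronglyMeasurable
        ((hη'.sub hη).comp (comap_measurable X))
    have hcG : P[G | m] =ᵐ[P] G :=
      Filter.EventuallyEq.of_eq (condExp_of_stronglyMeasurable hle hGsm hGint)
    have hcG2 : P[G | m] =ᵐ[P] fun _ => 0 := by
      calc P[G | m] =ᵐ[P] P[(fun ω => (Y ω - η (X ω)) - h' (W ω)) | m] :=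
            condExp_congr_ae hGeq
        _ =ᵐ[P] P[(fun ω => Y ω - η (X ω)) | m] - P[(fun ω => h' (W ω)) | m] :=
            condExp_sub hint2 hint1 m
        _ =ᵐ[P] fun _ => 0 := by
            filter_upwards [hcR, hcW] with ω h1 h2
            simp only [Pi.sub_apply, h1, h2, hmean1, hmean2, sub_zero]
    have hG0 : ∀ᵐ ω ∂P, η' (X ω) = η (X ω) := by
      filter_upwards [hcG.symm.trans hcG2] with ω h1
      have : η' (X ω) - η (X ω) = 0 := h1
      exact sub_eq_zero.mp this
    rw [← hlawX]
    have hset : MeasurableSet {x : Fin p → ℝ | η' x = η x} := by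
      have : {x : Fin p → ℝ | η' x = η x} = (fun x => η' x - η x) ⁻¹' {0} := by
        ext x; simp [sub_eq_zero]
      rw [this]
      exact (hη'.sub hη) (measurableSet_singleton 0)
    exact (ae_map_iff hX.aemeasurable hset).mpr hG0
end

section
/- Let (X, Y) follow the additive noise model add(η̃, h̃; μ) and let η : ℝ^p → ℝ^q be measurable. Suppose that there is NO c ∈ ℝ^q such that η̃(x) = η(x) + c for μ-almost every x, and suppose that both random vectors (X, Y − η(X)) and (X, h̃(W)) have densities. Then X and Y − η(X) are NOT independent. -/
open MeasureTheory ProbabilityTheory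
open scoped ENNReal

/-- A probability measure on `ℝ^q` invariant under translation by `d` forces `d = 0`. -/
lemma shift_eq_zero_of_map_eq {q : ℕ} (ν : Measure (Fin q → ℝ)) [IsProbabilityMeasure ν]
    (d : Fin q → ℝ) (h : ν.map (fun x => d + x) = ν) : d = 0 := by
  by_contra hd
  have hd' : (0:ℝ) < ‖d‖ := norm_pos_iff.mpr hd
  -- invariance under all multiples of d
  have hk : ∀ k : ℕ, ν.map (fun x => (k:ℝ) • d + x) = ν := by
    intro k
    induction k with
    | zero => simp
    | succ k ih =>
      have hcomp : (fun x : Fin q → ℝ => ((k+1 : ℕ):ℝ) • d + x)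
          = (fun x => d + x) ∘ (fun x => (k:ℝ) • d + x) := by
        funext x
        simp only [Function.comp_apply]
        push_cast
        rw [add_smul, one_smul]
        abel
      rw [hcomp, ← Measure.map_map (measurable_const_add d)
        (measurable_const_add ((k:ℝ) • d)), ih, h]
  have hinv : ∀ k : ℕ, ∀ A : Set (Fin q → ℝ), MeasurableSet A →
      ν ((fun x => (k:ℝ) • d + x) ⁻¹' A) = ν A := by
    intro k A hA
    conv_rhs => rw [← hk k]
    rw [Measure.map_apply (measurable_const_add _) hA]
  -- a ball with more than half the mass
  have hr : ∃ n : ℕ, (1:ℝ≥0∞)/2 < ν (Metric.closedBall 0 (n:ℝ)) := by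
    by_contra hcon
    push_neg at hcon
    have hU : (⋃ n : ℕ, Metric.closedBall (0 : Fin q → ℝ) (n:ℝ)) = Set.univ := by
      ext x
      simp only [Set.mem_iUnion, Metric.mem_closedBall, dist_zero_right, Set.mem_univ, iff_true]
      exact exists_nat_ge ‖x‖
    have hmono : Monotone (fun n : ℕ => Metric.closedBall (0 : Fin q → ℝ) (n:ℝ)) := by
      intro a b hab
      exact Metric.closedBall_subset_closedBall (by exact_mod_cast hab)
    have h1 : ν Set.univ ≤ 1/2 := by
      rw [← hU, hmono.directed_le.measure_iUnion]
      exact iSup_le hcon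
    rw [measure_univ] at h1
    exact absurd h1 (not_le.mpr (ENNReal.half_lt_self one_ne_zero ENNReal.one_ne_top))
  obtain ⟨n₀, hB⟩ := hr
  set r : ℝ := (n₀ : ℝ) with hrdef
  -- spacing
  obtain ⟨m, hm⟩ := exists_nat_gt ((2*r + 1)/‖d‖)
  have hmd : 2*r + 1 < (m:ℝ) * ‖d‖ := by
    rw [div_lt_iff₀ hd'] at hm
    linarith
  -- disjoint translated balls
  set S : ℕ → Set (Fin q → ℝ) := fun j => Metric.closedBall (-((((j*m : ℕ)):ℝ) • d)) r with hSdef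
  have hSmeas : ∀ j, MeasurableSet (S j) := fun j => measurableSet_closedBall
  have hpre : ∀ c : Fin q → ℝ,
      (fun x => c + x) ⁻¹' Metric.closedBall (0 : Fin q → ℝ) r = Metric.closedBall (-c) r := by
    intro c
    ext x
    simp only [Set.mem_preimage, Metric.mem_closedBall, dist_eq_norm, sub_zero, sub_neg_eq_add]
    rw [add_comm]
  have hSν : ∀ j, ν (S j) = ν (Metric.closedBall 0 r) := by
    intro j
    rw [hSdef]
    have := hinv (j*m) (Metric.closedBall (0 : Fin q → ℝ) r) measurableSet_closedBall
    rw [hpre] at this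
    exact this
  have hdisj : Pairwise (Function.onFun Disjoint S) := by
    intro i j hij
    refine Metric.closedBall_disjoint_closedBall ?_
    have hdist : dist (-((((i*m : ℕ)):ℝ) • d)) (-((((j*m : ℕ)):ℝ) • d))
        = |((j*m : ℕ):ℝ) - ((i*m : ℕ):ℝ)| * ‖d‖ := by
      rw [dist_eq_norm]
      have h0 : (-((((i*m : ℕ)):ℝ) • d)) - (-((((j*m : ℕ)):ℝ) • d))
          = (((j*m : ℕ):ℝ) - ((i*m : ℕ):ℝ)) • d := by
        rw [sub_smul]; abel
      rw [h0, norm_smul, Real.norm_eq_abs]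
    rw [hdist]
    have hm0 : (0:ℝ) ≤ (m:ℝ) := Nat.cast_nonneg m
    have hm1 : (m:ℝ) ≤ |((j*m : ℕ):ℝ) - ((i*m : ℕ):ℝ)| := by
      rcases hij.lt_or_gt with hlt | hlt
      · have hc : (i:ℝ) + 1 ≤ (j:ℝ) := by exact_mod_cast hlt
        have h1 : (m:ℝ) ≤ ((j*m : ℕ):ℝ) - ((i*m : ℕ):ℝ) := by push_cast; nlinarith
        exact h1.trans (le_abs_self _)
      · have hc : (j:ℝ) + 1 ≤ (i:ℝ) := by exact_mod_cast hlt
        have h1 : (m:ℝ) ≤ -(((j*m : ℕ):ℝ) - ((i*m : ℕ):ℝ)) := by push_cast; nlinarith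
        exact h1.trans (neg_le_abs _)
    have h2 : (m:ℝ) * ‖d‖ ≤ |((j*m : ℕ):ℝ) - ((i*m : ℕ):ℝ)| * ‖d‖ :=
      mul_le_mul_of_nonneg_right hm1 (le_of_lt hd')
    linarith
  -- contradiction: infinitely many disjoint sets of measure > 1/2
  have hsum : (∑' j : ℕ, ν (S j)) = ν (⋃ j, S j) := (measure_iUnion hdisj hSmeas).symm
  have htop : (∑' j : ℕ, ν (S j)) = ⊤ := by
    have : ∀ j, ν (S j) = ν (Metric.closedBall (0 : Fin q → ℝ) r) := hSν
    rw [tsum_congr this]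
    exact ENNReal.tsum_const_eq_top_of_ne_zero
      (by intro h0; rw [h0] at hB; exact absurd hB (by simp))
  have hle : ν (⋃ j, S j) ≤ 1 := prob_le_one
  rw [← hsum, htop] at hle
  exact absurd hle (by simp)

/-- Theorem 5 (ii) of the paper: if `(X, Y)` follows the additive noise model
`add(η', h'; μ)`, there is no `c ∈ ℝ^q` with `η'(x) = η(x) + c` for `μ`-almost every `x`,
and both `(X, Y - η(X))` and `(X, h'(W))` have densities, then `X` and the residual
`Y - η(X)` are NOT independent. -/
theorem anm_not_biased_equiv_implies_not_indep
    {p q : ℕ} {Ω : Type*} [MeasurableSpace Ω] (P : Measure Ω) [IsProbabilityMeasure P]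
    (X : Ω → (Fin p → ℝ)) (W : Ω → ℝ) (Y : Ω → (Fin q → ℝ))
    (μ : Measure (Fin p → ℝ))
    (η' η : (Fin p → ℝ) → (Fin q → ℝ)) (h' : ℝ → (Fin q → ℝ))
    (hX : Measurable X) (hW : Measurable W) (hY : Measurable Y)
    (hη' : Measurable η') (hη : Measurable η) (hh' : Measurable h')
    (hlawX : Measure.map X P = μ)
    (hlawW : Measure.map W P = volume.restrict (Set.Icc (0 : ℝ) 1))
    (hindep : IndepFun X W P)
    (hadd : ∀ᵐ ω ∂P, Y ω = η' (X ω) + h' (W ω))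
    (hnc : ¬ ∃ c : Fin q → ℝ, η' =ᵐ[μ] fun x => η x + c)
    (hdens1 : Measure.map (fun ω => (X ω, Y ω - η (X ω))) P
      ≪ (volume : Measure ((Fin p → ℝ) × (Fin q → ℝ))))
    (hdens2 : Measure.map (fun ω => (X ω, h' (W ω))) P
      ≪ (volume : Measure ((Fin p → ℝ) × (Fin q → ℝ)))) :
    ¬ IndepFun X (fun ω => Y ω - η (X ω)) P := by
  intro hIndep
  apply hnc
  -- notation
  set R : Ω → (Fin q → ℝ) := fun ω => Y ω - η (X ω) with hRdef
  set g : (Fin p → ℝ) → (Fin q → ℝ) := fun x => η' x - η x with hgdef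
  set N : Ω → (Fin q → ℝ) := fun ω => h' (W ω) with hNdef
  have hg : Measurable g := hη'.sub hη
  have hR : Measurable R := hY.sub (hη.comp hX)
  have hN : Measurable N := hh'.comp hW
  set νN : Measure (Fin q → ℝ) := Measure.map N P with hνNdef
  set νR : Measure (Fin q → ℝ) := Measure.map R P with hνRdef
  have : IsProbabilityMeasure μ := hlawX ▸ Measure.isProbabilityMeasure_map hX.aemeasurable
  have : IsProbabilityMeasure νN := Measure.isProbabilityMeasure_map hN.aemeasurable
  have : IsProbabilityMeasure νR := Measure.isProbabilityMeasure_map hR.aemeasurable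
  -- laws of pairs
  have hXN : IndepFun X N P := hindep.comp measurable_id hh'
  have law1 : Measure.map (fun ω => (X ω, N ω)) P = μ.prod νN := by
    rw [(indepFun_iff_map_prod_eq_prod_map_map hX.aemeasurable hN.aemeasurable).mp hXN, hlawX]
  have law2 : Measure.map (fun ω => (X ω, R ω)) P = μ.prod νR := by
    rw [(indepFun_iff_map_prod_eq_prod_map_map hX.aemeasurable hR.aemeasurable).mp hIndep, hlawX]
  -- push forward along T
  set T : (Fin p → ℝ) × (Fin q → ℝ) → (Fin p → ℝ) × (Fin q → ℝ) :=
    fun z => (z.1, g z.1 + z.2) with hTdef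
  have hT : Measurable T := measurable_fst.prodMk ((hg.comp measurable_fst).add measurable_snd)
  have haeT : (fun ω => (X ω, R ω)) =ᵐ[P] (T ∘ fun ω => (X ω, N ω)) := by
    filter_upwards [hadd] with ω hω
    simp only [hRdef, hTdef, hNdef, hgdef, Function.comp_apply, hω, Prod.mk.injEq, true_and]
    abel
  have hmap : μ.prod νR = Measure.map T (μ.prod νN) := by
    rw [← law1, ← law2, Measure.map_map hT (hX.prodMk hN)]
    exact Measure.map_congr haeT
  -- the kernel x ↦ νN shifted by g x
  have hF : Measurable (fun z : (Fin p → ℝ) × (Fin q → ℝ) => g z.1 + z.2) :=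
    (hg.comp measurable_fst).add measurable_snd
  set K : Kernel (Fin p → ℝ) (Fin q → ℝ) :=
    Kernel.map ((Kernel.deterministic id measurable_id) ×ₖ Kernel.const _ νN)
      (fun z => g z.1 + z.2) with hKdef
  have hK : ∀ x, K x = νN.map (fun n => g x + n) := by
    intro x
    rw [hKdef, Kernel.map_apply _ hF, Kernel.prod_apply, Kernel.deterministic_apply,
      Kernel.const_apply, id_eq, Measure.dirac_prod, Measure.map_map hF measurable_prodMk_left]
    rfl
  have hKmarkov : IsMarkovKernel K := Kernel.IsMarkovKernel.map _ hF
  -- two disintegrations of μ.prod νR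
  have hcomp : μ.prod νR = μ ⊗ₘ K := by
    rw [hmap]
    ext s hs
    rw [Measure.map_apply hT hs, Measure.compProd_apply hs, Measure.prod_apply (hT hs)]
    refine lintegral_congr fun x => ?_
    rw [hK x, Measure.map_apply (measurable_const_add _) (measurable_prodMk_left hs)]
    rfl
  have h1 : ∀ᵐ x ∂μ, K x = (μ.prod νR).condKernel x := by
    have := eq_condKernel_of_measure_eq_compProd (ρ := μ.prod νR) K
      (by rw [Measure.fst_prod]; exact hcomp)
    rwa [Measure.fst_prod] at this
  have h2 : ∀ᵐ x ∂μ, Kernel.const _ νR x = (μ.prod νR).condKernel x := by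
    have := eq_condKernel_of_measure_eq_compProd (ρ := μ.prod νR) (Kernel.const _ νR)
      (by rw [Measure.fst_prod, Measure.compProd_const])
    rwa [Measure.fst_prod] at this
  have hae2 : ∀ᵐ x ∂μ, νN.map (fun n => g x + n) = νR := by
    filter_upwards [h1, h2] with x e1 e2
    rw [← hK x, e1, ← e2, Kernel.const_apply]
  -- pick a base point
  obtain ⟨x₀, hx₀⟩ := hae2.exists
  refine ⟨g x₀, ?_⟩
  filter_upwards [hae2] with x hx
  have heq : νN.map (fun n => g x + n) = νN.map (fun n => g x₀ + n) := hx.trans hx₀.symm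
  have h3 : νN.map (fun n => (g x - g x₀) + n) = νN := by
    have hmm := congrArg (Measure.map (fun y => -(g x₀) + y)) heq
    rw [Measure.map_map (measurable_const_add _) (measurable_const_add _),
      Measure.map_map (measurable_const_add _) (measurable_const_add _)] at hmm
    have e1 : ((fun y => -(g x₀) + y) ∘ (fun n => g x + n))
        = fun n => (g x - g x₀) + n := by funext n; simp [Function.comp]; abel
    have e2 : ((fun y => -(g x₀) + y) ∘ (fun n => g x₀ + n)) = id := by
      funext n; simp [Function.comp]
    rw [e1, e2, Measure.map_id] at hmm
    exact hmm
  have h4 : g x - g x₀ = 0 := shift_eq_zero_of_map_eq νN _ h3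
  have h5 : g x = g x₀ := sub_eq_zero.mp h4
  show η' x = η x + g x₀
  rw [← h5]
  show η' x = η x + (η' x - η x)
  exact eq_add_of_sub_eq' rfl
end
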